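/- Let (a,b) be a matching pair in L^∞(ℝ) with subordinated pair (c,d). Then the following operator identity holds on L²(ℝ⁺): (W(a) + H(b)) ∘ (I − H(c̃)) = (W(b) + H(a)) ∘ W(c). -/

import Mathlib

open MeasureTheory Complex Filter Set

noncomputable section

namespace WienerHopf

/-- The space `L²(ℝ;ℂ)`. -/
abbrev L2 : Type := Lp ℂ 2 (volume : Measure ℝ)

open Classical in
/-- Multiplication by a function `a : ℝ → ℂ`, as a bounded operator on `L²(ℝ)`.
(It is defined to be `0` in the degenerate case where `a` is not essentially bounded.) -/
def mul (a : ℝ → ℂ) : L2 →L[ℂ] L2 :=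
  if h : MemLp a ⊤ (volume : Measure ℝ) then
    LinearMap.mkContinuous
      { toFun := fun f => ((Lp.memLp f).smul (r := 2) h).toLp (a • (f : ℝ → ℂ))
        map_add' := by
          intro f g
          rw [← MemLp.toLp_add]
          apply Lp.ext
          filter_upwards [MemLp.coeFn_toLp ((Lp.memLp (f + g)).smul (r := 2) h),
            MemLp.coeFn_toLp (((Lp.memLp f).smul (r := 2) h).add
              ((Lp.memLp g).smul (r := 2) h)),
            Lp.coeFn_add f g] with t h1 h2 h3
          rw [h1, h2]
          simp only [Pi.smul_apply, smul_eq_mul, Pi.mul_apply, Pi.add_apply]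
          rw [h3]
          simp [Pi.add_apply, mul_add]
        map_smul' := by
          intro m f
          simp only [RingHom.id_apply]
          rw [← MemLp.toLp_const_smul]
          apply Lp.ext
          filter_upwards [MemLp.coeFn_toLp ((Lp.memLp (m • f)).smul (r := 2) h),
            MemLp.coeFn_toLp (((Lp.memLp f).smul (r := 2) h).const_smul m),
            Lp.coeFn_smul m f] with t h1 h2 h3
          rw [h1, h2]
          simp only [Pi.smul_apply, smul_eq_mul, Pi.mul_apply]
          rw [h3]
          simp only [Pi.smul_apply, smul_eq_mul]
          ring
        }
      (eLpNorm a ⊤ (volume : Measure ℝ)).toReal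
      (by
        intro f
        simp only [LinearMap.coe_mk, AddHom.coe_mk]
        rw [Lp.norm_toLp, Lp.norm_def]
        have hle := eLpNorm_smul_le_mul_eLpNorm (Lp.aestronglyMeasurable f) h.1
          (p := ⊤) (q := 2) (r := 2)
        calc (eLpNorm (a • (f : ℝ → ℂ)) 2 (volume : Measure ℝ)).toReal
            ≤ (eLpNorm a ⊤ (volume : Measure ℝ) * eLpNorm (f : ℝ → ℂ) 2 volume).toReal := by
              apply ENNReal.toReal_mono _ hle
              exact ENNReal.mul_ne_top h.2.ne (Lp.eLpNorm_lt_top f).ne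
          _ = (eLpNorm a ⊤ (volume : Measure ℝ)).toReal *
              (eLpNorm (f : ℝ → ℂ) 2 (volume : Measure ℝ)).toReal := ENNReal.toReal_mul)
  else 0

theorem mul_coeFn {a : ℝ → ℂ} (h : MemLp a ⊤ (volume : Measure ℝ)) (f : L2) :
    (mul a f : ℝ → ℂ) =ᵐ[volume] fun t => a t * f t := by
  rw [mul, dif_pos h]
  show ⇑(((Lp.memLp f).smul (r := 2) h).toLp (a • (f : ℝ → ℂ))) =ᵐ[volume]
    fun t => a t * f t
  exact (MemLp.coeFn_toLp _).trans
    (Eventually.of_forall fun t => by simp [Pi.smul_apply])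

/-- `(-t)`-reflection is measure preserving. -/
theorem negMP : MeasurePreserving (fun t : ℝ => -t) volume volume :=
  Measure.measurePreserving_neg (volume : Measure ℝ)

/-- The reflection operator `(Jφ)(t) = φ(-t)` on `L²(ℝ)`. -/
def reflect : L2 →L[ℂ] L2 :=
  LinearMap.mkContinuous
    { toFun := ⇑(Lp.compMeasurePreserving (fun t : ℝ => -t) negMP)
      map_add' := fun f g => map_add _ f g
      map_smul' := by
        intro m g
        simp only [RingHom.id_apply]
        apply Lp.ext
        filter_upwards [Lp.coeFn_compMeasurePreserving (f := fun t : ℝ => -t) (m • g) negMP,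
          Lp.coeFn_smul m (Lp.compMeasurePreserving (fun t : ℝ => -t) negMP g),
          Lp.coeFn_compMeasurePreserving (f := fun t : ℝ => -t) g negMP,
          negMP.quasiMeasurePreserving.ae_eq_comp (Lp.coeFn_smul m g)] with t h1 h2 h3 h4
        rw [h1, h2, h4]
        simp only [Function.comp_apply, Pi.smul_apply, smul_eq_mul]
        rw [h3]
        simp only [Function.comp_apply]
      }
    1
    (by
      intro g
      rw [one_mul]
      exact le_of_eq (Lp.norm_compMeasurePreserving g _))

theorem reflect_coeFn (g : L2) :
    (reflect g : ℝ → ℂ) =ᵐ[volume] fun t => g (-t) :=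
  Lp.coeFn_compMeasurePreserving (f := fun t : ℝ => -t) g negMP

/-- The indicator function of `(0,∞)`. -/
def chiPlus : ℝ → ℂ := Set.indicator (Set.Ioi (0 : ℝ)) (fun _ => 1)

theorem chiPlus_memℒp : MemLp chiPlus ⊤ (volume : Measure ℝ) :=
  (memLp_top_const (1 : ℂ)).indicator measurableSet_Ioi

/-- The subspace of `L²(ℝ)` consisting of functions vanishing a.e. on `(-∞,0)`;
it is identified with `L²(ℝ⁺)`. -/
def posSubspace : Submodule ℂ L2 where
  carrier := {f : L2 | ∀ᵐ t : ℝ ∂volume, t < 0 → (f : ℝ → ℂ) t = 0}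
  zero_mem' := by
    filter_upwards [Lp.coeFn_zero ℂ 2 (volume : Measure ℝ)] with t ht _
    simp [ht]
  add_mem' := by
    intro f g hf hg
    filter_upwards [hf, hg, Lp.coeFn_add f g] with t h1 h2 h3 hlt
    rw [h3]
    simp [Pi.add_apply, h1 hlt, h2 hlt]
  smul_mem' := by
    intro m f hf
    filter_upwards [hf, Lp.coeFn_smul m f] with t h1 h2 hlt
    rw [h2]
    simp [Pi.smul_apply, h1 hlt]

/-- `L²(ℝ⁺)`, realized as the subspace of `L²(ℝ)` of functions vanishing a.e. on `(-∞,0)`. -/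
abbrev Lp2Plus : Type := ↥posSubspace

theorem chiPlus_mul_mem (g : L2) : mul chiPlus g ∈ posSubspace := by
  filter_upwards [mul_coeFn chiPlus_memℒp g] with t ht hlt
  rw [ht, chiPlus, Set.indicator_of_notMem (by simpa using hlt.le), zero_mul]

/-- Compression of an operator on `L²(ℝ)` to the subspace `L²(ℝ⁺)`:
`φ ↦ χ₊ ⬝ (T φ)`. -/
def compress (T : L2 →L[ℂ] L2) : Lp2Plus →L[ℂ] Lp2Plus :=
  LinearMap.mkContinuous
    { toFun := fun φ => ⟨mul chiPlus (T φ.val), chiPlus_mul_mem _⟩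
      map_add' := by intro φ ψ; apply Subtype.ext; simp
      map_smul' := by intro m φ; apply Subtype.ext; simp }
    ‖(mul chiPlus).comp T‖
    (by intro φ; exact ((mul chiPlus).comp T).le_opNorm φ.val)

theorem compress_coe (T : L2 →L[ℂ] L2) (φ : Lp2Plus) :
    (compress T φ : L2) = mul chiPlus (T φ.val) := rfl

/-- An abstract realization of the Fourier transform
`(𝓕φ)(ξ) = ∫ e^{iξx} φ(x) dx` on `L²(ℝ)` (together with its inverse
`(𝓕⁻¹ψ)(x) = (2π)⁻¹ ∫ e^{-iξx} ψ(ξ) dξ`): a continuous linear bijection of `L²(ℝ)`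
that is given by the above integral formulas on integrable functions.  By density
of `L¹ ∩ L²` in `L²`, these properties determine the operator uniquely, and by the
Fourier–Plancherel theory such an operator exists. -/
structure FourierL2 where
  equiv : L2 ≃L[ℂ] L2
  forward : ∀ φ : L2, Integrable (φ : ℝ → ℂ) volume →
      (equiv φ : ℝ → ℂ) =ᵐ[volume]
        fun ξ : ℝ => ∫ x : ℝ, Complex.exp (Complex.I * ξ * x) * φ x
  inverse : ∀ ψ : L2, Integrable (ψ : ℝ → ℂ) volume →
      (equiv.symm ψ : ℝ → ℂ) =ᵐ[volume]
        fun x : ℝ => (2 * Real.pi : ℂ)⁻¹ * ∫ ξ : ℝ, Complex.exp (-(Complex.I * ξ * x)) * ψ ξ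

/-- `W⁰(a) = 𝓕⁻¹ M_a 𝓕`, the convolution (Fourier multiplier) operator on `L²(ℝ)`. -/
def W0 (F : FourierL2) (a : ℝ → ℂ) : L2 →L[ℂ] L2 :=
  (F.equiv.symm : L2 →L[ℂ] L2).comp ((mul a).comp (F.equiv : L2 →L[ℂ] L2))

/-- The Wiener–Hopf operator `W(a) = χ₊ W⁰(a)` on `L²(ℝ⁺)`. -/
def W (F : FourierL2) (a : ℝ → ℂ) : Lp2Plus →L[ℂ] Lp2Plus :=
  compress (W0 F a)

/-- The Hankel operator `H(b) = χ₊ W⁰(b) J` on `L²(ℝ⁺)`. -/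
def H (F : FourierL2) (b : ℝ → ℂ) : Lp2Plus →L[ℂ] Lp2Plus :=
  compress ((W0 F b).comp reflect)

/-- `a` is invertible in the Banach algebra `L^∞(ℝ)`: `a ∈ L^∞`, `a ≠ 0` a.e.,
and the pointwise inverse `a⁻¹` again belongs to `L^∞`. -/
def InvertibleLinf (a : ℝ → ℂ) : Prop :=
  MemLp a ⊤ (volume : Measure ℝ) ∧ (∀ᵐ t : ℝ ∂volume, a t ≠ 0) ∧
    MemLp (fun t => (a t)⁻¹) ⊤ (volume : Measure ℝ)

/-- `(a,b)` is a matching pair: `a, b` are invertible in `L^∞(ℝ)` and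
`a(t)a(-t) = b(t)b(-t)` for a.e. `t`. -/
def MatchingPair (a b : ℝ → ℂ) : Prop :=
  InvertibleLinf a ∧ InvertibleLinf b ∧
    ∀ᵐ t : ℝ ∂volume, a t * a (-t) = b t * b (-t)

/-!
Write `P` for multiplication by `χ₊` and `J` for the reflection on `L²(ℝ)`, and `A, B, C, C'`
for `W⁰(a), W⁰(b), W⁰(c), W⁰(c̃)`. Then `W(g)` and `H(g)` are the compressions of `P W⁰(g)` and
`P W⁰(g) J`, and `J² = 1`, `JP = (1 - P)J`, `JC = C'J` (the Fourier transform commutes with `J`).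
The matching condition says exactly `BC = A` and `AC' = B`, and from these relations the
identity is a computation in a ring: the two sides differ by `P(A - BC) + P(B - AC')J`.
-/

theorem compression_identity {R : Type*} [Ring R] {P J A B C C' : R}
    (hJJ : J * J = 1) (hJP : J * P = (1 - P) * J) (hJC : J * C = C' * J)
    (hBC : B * C = A) (hAC' : A * C' = B) :
    (P * A + P * B * J) * (1 - P * C' * J) = (P * B + P * A * J) * (P * C) := by
  have hJPC'J : J * P * C' * J = (1 - P) * C := by
    rw [hJP, mul_assoc (1 - P), mul_assoc (1 - P), mul_assoc J, ← hJC, ← mul_assoc J, hJJ,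
      one_mul]
  have hJPC : J * P * C = (1 - P) * C' * J := by
    rw [hJP, mul_assoc (1 - P) J C, hJC, mul_assoc]
  rw [← sub_eq_zero]
  calc (P * A + P * B * J) * (1 - P * C' * J) - (P * B + P * A * J) * (P * C)
      = P * A + P * B * J - P * A * P * C' * J - P * B * (J * P * C' * J)
          - P * B * P * C - P * A * (J * P * C) := by noncomm_ring
    _ = P * (A - B * C) + P * (B - A * C') * J := by rw [hJPC'J, hJPC]; noncomm_ring
    _ = 0 := by simp [hBC, hAC']

theorem mul_congr_ae {a a' : ℝ → ℂ} (h : a =ᵐ[volume] a') : mul a = mul a' := by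
  by_cases ha : MemLp a ⊤ volume
  · ext f
    filter_upwards [mul_coeFn ha f, mul_coeFn (ha.ae_eq h) f, h] with t h1 h2 h3
    rw [h1, h2, h3]
  · have ha' : ¬ MemLp a' ⊤ volume := fun ha' => ha (ha'.ae_eq h.symm)
    rw [mul, mul, dif_neg ha, dif_neg ha']

theorem mul_mul_mul {a b : ℝ → ℂ} (ha : MemLp a ⊤ volume) (hb : MemLp b ⊤ volume) :
    mul a * mul b = mul (fun t => a t * b t) := by
  ext f
  filter_upwards [mul_coeFn ha (mul b f), mul_coeFn hb f, mul_coeFn (hb.mul' ha) f]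
    with t h1 h2 h3
  rw [mul_apply_eq_comp, h1, h2, h3, mul_assoc]

theorem memLp_top_comp_neg {g : ℝ → ℂ} (hg : MemLp g ⊤ volume) :
    MemLp (fun t => g (-t)) ⊤ volume :=
  hg.comp_measurePreserving negMP

theorem reflect_mul_reflect : reflect * reflect = 1 := by
  ext f
  filter_upwards [reflect_coeFn (reflect f),
    negMP.quasiMeasurePreserving.ae_eq_comp (reflect_coeFn f)] with t h1 h2
  rw [mul_apply_eq_comp, h1, one_apply_eq_self]
  simpa using h2

theorem reflect_mul_mul {g : ℝ → ℂ} (hg : MemLp g ⊤ volume) :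
    reflect * mul g = mul (fun t => g (-t)) * reflect := by
  ext f
  filter_upwards [reflect_coeFn (mul g f),
    negMP.quasiMeasurePreserving.ae_eq_comp (mul_coeFn hg f),
    mul_coeFn (memLp_top_comp_neg hg) (reflect f), reflect_coeFn f] with t h1 h2 h3 h4
  simp only [Function.comp_apply] at h2
  rw [mul_apply_eq_comp, mul_apply_eq_comp, h1, h2, h3, h4]

theorem mul_chiPlus_comp_neg : mul (fun t => chiPlus (-t)) = 1 - mul chiPlus := by
  ext f
  filter_upwards [mul_coeFn (memLp_top_comp_neg chiPlus_memℒp) f,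
    Lp.coeFn_sub f (mul chiPlus f), mul_coeFn chiPlus_memℒp f, Measure.ae_ne volume 0]
    with t h1 h2 h3 ht
  rw [sub_apply, one_apply_eq_self, h1, h2, Pi.sub_apply, h3]
  rcases ht.lt_or_gt with ht | ht <;> simp [chiPlus, ht, ht.not_gt]

theorem reflect_mul_chiPlus : reflect * mul chiPlus = (1 - mul chiPlus) * reflect := by
  rw [reflect_mul_mul chiPlus_memℒp, mul_chiPlus_comp_neg]

theorem dense_setOf_integrable : Dense {f : L2 | Integrable (f : ℝ → ℂ) volume} := by
  refine (Lp.simpleFunc.dense (E := ℂ) (μ := volume) (p := 2) (by norm_num)).mono ?_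
  intro f hf
  set s : Lp.simpleFunc ℂ 2 volume := ⟨f, hf⟩
  have hs : Integrable (Lp.simpleFunc.toSimpleFunc s) volume :=
    (SimpleFunc.memLp_iff_integrable (by norm_num) (by norm_num)).mp (Lp.simpleFunc.memLp s)
  exact hs.congr (Lp.simpleFunc.toSimpleFunc_eq_toFun s)

theorem integrable_reflect {f : L2} (hf : Integrable (f : ℝ → ℂ) volume) :
    Integrable (reflect f : ℝ → ℂ) volume :=
  ((negMP.integrable_comp (Lp.aestronglyMeasurable f)).mpr hf).congr (reflect_coeFn f).symm

namespace FourierL2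

variable (F : FourierL2)

theorem reflect_apply_of_integrable {f : L2} (hf : Integrable (f : ℝ → ℂ) volume) :
    reflect (F.equiv f) = F.equiv (reflect f) := by
  apply Lp.ext
  filter_upwards [reflect_coeFn (F.equiv f),
    negMP.quasiMeasurePreserving.ae_eq_comp (F.forward f hf),
    F.forward (reflect f) (integrable_reflect hf)] with ξ h1 h2 h3
  simp only [Function.comp_apply] at h2
  rw [h1, h2, h3, ← integral_neg_eq_self]
  refine integral_congr_ae ?_
  filter_upwards [reflect_coeFn f] with x hx
  rw [hx]
  push_cast
  ring_nf

theorem reflect_mul_equiv : reflect * (F.equiv : L2 →L[ℂ] L2) = F.equiv * reflect :=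
  ContinuousLinearMap.coeFn_injective <|
    Continuous.ext_on dense_setOf_integrable (by fun_prop) (by fun_prop)
      fun _ hf => F.reflect_apply_of_integrable hf

theorem reflect_mul_equiv_symm :
    reflect * (F.equiv.symm : L2 →L[ℂ] L2) = F.equiv.symm * reflect := by
  ext1 f
  apply F.equiv.injective
  simpa using congr($F.reflect_mul_equiv (F.equiv.symm f)).symm

end FourierL2

theorem W0_eq_mul (F : FourierL2) (g : ℝ → ℂ) :
    W0 F g = (F.equiv.symm : L2 →L[ℂ] L2) * mul g * F.equiv := rfl

theorem W0_congr_ae (F : FourierL2) {u v : ℝ → ℂ} (h : u =ᵐ[volume] v) : W0 F u = W0 F v := by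
  rw [W0, W0, mul_congr_ae h]

theorem W0_mul_W0 (F : FourierL2) {u v : ℝ → ℂ} (hu : MemLp u ⊤ volume)
    (hv : MemLp v ⊤ volume) : W0 F u * W0 F v = W0 F (fun t => u t * v t) := by
  ext1 f
  simp [W0, ← mul_mul_mul hu hv]

theorem reflect_mul_W0 (F : FourierL2) {g : ℝ → ℂ} (hg : MemLp g ⊤ volume) :
    reflect * W0 F g = W0 F (fun t => g (-t)) * reflect := by
  simp only [W0_eq_mul, ← mul_assoc, F.reflect_mul_equiv_symm]
  rw [mul_assoc _ reflect, reflect_mul_mul hg, ← mul_assoc, mul_assoc _ reflect,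
    F.reflect_mul_equiv, ← mul_assoc]

namespace MatchingPair

theorem mul_subordinate {a b : ℝ → ℂ} (h : MatchingPair a b) :
    (fun t => b t * (a t * (b t)⁻¹)) =ᵐ[volume] a := by
  filter_upwards [h.2.1.2.1] with t hb
  field_simp

theorem mul_subordinate_comp_neg {a b : ℝ → ℂ} (h : MatchingPair a b) :
    (fun t => a t * (a (-t) * (b (-t))⁻¹)) =ᵐ[volume] b := by
  filter_upwards [h.2.2, negMP.quasiMeasurePreserving.tendsto_ae.eventually h.2.1.2.1]
    with t hab hb
  rw [← mul_assoc, hab, mul_assoc, mul_inv_cancel₀ hb, mul_one]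

end MatchingPair

theorem identity_one_minus_Hankel_general
    (F : FourierL2) (a b c : ℝ → ℂ) (hab : MatchingPair a b)
    (hc : c = fun t => a t * (b t)⁻¹) :
    (W F a + H F b).comp ((1 : Lp2Plus →L[ℂ] Lp2Plus) - H F (fun t => c (-t))) =
      (W F b + H F a).comp (W F c) := by
  subst hc
  have hc_mem : MemLp (fun t => a t * (b t)⁻¹) ⊤ volume := hab.2.1.2.2.mul' hab.1.1
  have hbc : W0 F b * W0 F (fun t => a t * (b t)⁻¹) = W0 F a := by
    rw [W0_mul_W0 F hab.2.1.1 hc_mem]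
    exact W0_congr_ae F hab.mul_subordinate
  have hac : W0 F a * W0 F (fun t => a (-t) * (b (-t))⁻¹) = W0 F b := by
    rw [W0_mul_W0 F hab.1.1 (memLp_top_comp_neg hc_mem)]
    exact W0_congr_ae F hab.mul_subordinate_comp_neg
  have key := compression_identity reflect_mul_reflect reflect_mul_chiPlus
    (reflect_mul_W0 F hc_mem) hbc hac
  ext1 φ
  apply Subtype.ext
  have h := congr($key (φ : L2))
  simp only [mul_apply_eq_comp, add_apply, sub_apply, one_apply_eq_self, map_sub] at h
  simpa only [W, H, ContinuousLinearMap.comp_sub, ContinuousLinearMap.add_comp, sub_apply,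
    add_apply, ContinuousLinearMap.comp_apply, one_apply_eq_self, AddSubgroupClass.coe_sub,
    Submodule.coe_add, compress_coe] using h

/-- For a matching pair `(a,b)` with subordinated pair `(c,d)`:
`(W(a) + H(b))(I - H(c̃)) = (W(b) + H(a)) W(c)`. -/
theorem identity_one_minus_Hankel
    (F : FourierL2) (a b c d : ℝ → ℂ) (hab : MatchingPair a b)
    (hc : c = fun t => a t * (b t)⁻¹) (hd : d = fun t => a t * (b (-t))⁻¹) :
    (W F a + H F b).comp ((1 : Lp2Plus →L[ℂ] Lp2Plus) - H F (fun t => c (-t))) =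
      (W F b + H F a).comp (W F c) :=
  identity_one_minus_Hankel_general F a b c hab hc

end WienerHopf
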